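/- With the same sampling scheme over β-subsets of rows of A (rows normalized, selecting the row with maximal positive residual in the sample), for any y ∈ ℝ^n one has E[‖a_{i*} (a_{i*}^T y − b_{i*})^+‖²] ≤ (β/m) ‖(Ay − b)^+‖². -/

import Mathlib

noncomputable section
open Matrix Finset

/-- Positive residual `(aᵢᵀy − bᵢ)⁺` of row `i` of the system `Ax ≤ b` at `y`. -/
def res {m n : ℕ} (A : Matrix (Fin m) (Fin n) ℝ) (b : Fin m → ℝ) (y : Fin n → ℝ)
    (i : Fin m) : ℝ :=
  max (A.mulVec y i - b i) 0

/-!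
Since the rows are unit vectors, the `k`-th term of the expectation is `C(β−1+k, β−1) rₖ²`,
where the `rₖ` are distinct entries of `r = (Ay − b)⁺`. Bounding every weight by the largest
one, `C(m−1, β−1)`, and the partial sum of the `rₖ²` by `‖r‖²` gives the bound
`C(m−1, β−1) / C(m, β) · ‖r‖² = (β/m) ‖r‖²`.
-/

lemma sum_mul_sq_of_sum_sq_eq_one {ι : Type*} [Fintype ι] {v : ι → ℝ}
    (hv : ∑ t, v t ^ 2 = 1) (c : ℝ) : ∑ t, (c * v t) ^ 2 = c ^ 2 := by
  simp only [mul_pow, ← mul_sum, hv, mul_one]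

lemma sum_comp_le_sum_of_injective {ι κ : Type*} [Fintype ι] [Fintype κ] {f : ι → ℝ}
    (hf : 0 ≤ f) {e : κ → ι} (he : Function.Injective e) : ∑ k, f (e k) ≤ ∑ i, f i := by
  classical
  rw [← sum_image fun a _ b _ h => he h]
  exact sum_le_sum_of_subset_of_nonneg (subset_univ _) fun i _ _ => hf i

lemma sum_mul_comp_le_of_injective {ι κ : Type*} [Fintype ι] [Fintype κ] {f : ι → ℝ}
    (hf : 0 ≤ f) {e : κ → ι} (he : Function.Injective e) {w : κ → ℝ} {W : ℝ}
    (hw : ∀ k, w k ≤ W) (hW : 0 ≤ W) : ∑ k, w k * f (e k) ≤ W * ∑ i, f i :=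
  calc ∑ k, w k * f (e k) ≤ ∑ k, W * f (e k) :=
        sum_le_sum fun k _ => mul_le_mul_of_nonneg_right (hw k) (hf _)
    _ = W * ∑ k, f (e k) := (mul_sum ..).symm
    _ ≤ W * ∑ i, f i := mul_le_mul_of_nonneg_left (sum_comp_le_sum_of_injective hf he) hW

lemma choose_pred_div_choose {m β : ℕ} (hβ : 1 ≤ β) (hβm : β ≤ m) :
    ((m - 1).choose (β - 1) : ℝ) / m.choose β = β / m := by
  obtain ⟨n, rfl⟩ : ∃ n, m = n + 1 := ⟨m - 1, by omega⟩
  obtain ⟨k, rfl⟩ : ∃ k, β = k + 1 := ⟨β - 1, by omega⟩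
  have hpos : (0 : ℝ) < (n + 1).choose (k + 1) := by exact_mod_cast Nat.choose_pos hβm
  have key : ((n + 1 : ℕ) : ℝ) * n.choose k = (n + 1).choose (k + 1) * (k + 1 : ℕ) := by
    exact_mod_cast Nat.add_one_mul_choose_eq n k
  simp only [Nat.add_sub_cancel]
  rw [div_eq_div_iff hpos.ne' (by positivity)]
  linarith

/-- For `A` with unit-norm rows, under the β-subset sampling scheme
selecting the row with maximal positive residual (encoded by a sorting bijection `ord`,
so the expectation of `q(i*)` is `(1/C(m,β)) Σ_{k=0}^{m−β} C(β−1+k, β−1) q(i_k)` with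
`i_k` the index of the `(β+k)`-th smallest entry of `(Ay − b)⁺`), one has
`E[‖a_{i*}(a_{i*}ᵀy − b_{i*})⁺‖²] ≤ (β/m)‖(Ay − b)⁺‖²`. -/
theorem stmt1 {m n β : ℕ} (hβ : 1 ≤ β) (hβm : β ≤ m)
    (A : Matrix (Fin m) (Fin n) ℝ) (b : Fin m → ℝ) (y : Fin n → ℝ)
    (hrows : ∀ i, ∑ j, A i j ^ 2 = 1)
    (ord : Fin m ≃ Fin m) :
    (1 / (m.choose β : ℝ)) *
      ∑ k : Fin (m - β + 1), ((β - 1 + k.val).choose (β - 1) : ℝ) *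
        (∑ t, (res A b y (ord ⟨β - 1 + k.val, by have := k.isLt; omega⟩) *
            A (ord ⟨β - 1 + k.val, by have := k.isLt; omega⟩) t) ^ 2)
    ≤ ((β : ℝ) / (m : ℝ)) * ∑ i, res A b y i ^ 2 := by
  simp only [sum_mul_sq_of_sum_sq_eq_one (hrows _)]
  have hinj : Function.Injective fun k : Fin (m - β + 1) =>
      ord ⟨β - 1 + k.val, by have := k.isLt; omega⟩ := fun k k' h => by
    have := congrArg Fin.val (ord.injective h)
    exact Fin.ext (by simp only at this; omega)
  have hweights := sum_mul_comp_le_of_injective (fun i => sq_nonneg (res A b y i)) hinj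
    (w := fun k => ((β - 1 + k.val).choose (β - 1) : ℝ)) (W := ((m - 1).choose (β - 1) : ℝ))
    (fun k => by exact_mod_cast Nat.choose_le_choose _ (by omega : β - 1 + k.val ≤ m - 1)) (by positivity)
  calc _ ≤ 1 / (m.choose β : ℝ) * (((m - 1).choose (β - 1) : ℝ) * ∑ i, res A b y i ^ 2) :=
        mul_le_mul_of_nonneg_left hweights (by positivity)
    _ = _ := by rw [← mul_assoc, one_div_mul_eq_div, choose_pred_div_choose hβ hβm]
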